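/- Let 0 < β < n and let u be a continuous weight function on ℝⁿ × (0,∞). If sup_{x∈ℝⁿ} sup_{0<s<∞} s^{β} · ( sup_{s<y<∞} y^{−β} sup_{0<τ<y} u(x,τ) ) · ∫_s^∞ t^{−β−1} · ( sup_{t<z<∞} z^{−β} sup_{0<τ<z} u(x,τ) )^{−1} dt < ∞, then there is a constant C such that sup_{x∈ℝⁿ} sup_{r>0} u(x,r) ∫_{ℝⁿ∖B(x,r)} g(y) |x−y|^{−β} dy ≤ C · sup_{x∈ℝⁿ} sup_{r>0} u(x,r) ( sup_{t>r} t^{−β} ∫_{B(x,t)} g(y) dy ) for every nonnegative measurable function g on ℝⁿ. -/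

import Mathlib

open MeasureTheory ENNReal Set Metric

noncomputable section

abbrev Rn (n : ℕ) : Type := EuclideanSpace ℝ (Fin n)

/-- `v(E) = ∫_E v`. -/
def wMeasure {n : ℕ} (v : Rn n → ℝ) (E : Set (Rn n)) : ℝ≥0∞ :=
  ∫⁻ x in E, ENNReal.ofReal (v x)

/-- `‖f‖_{L_p(Ω,v)}` for an `ℝ≥0∞`-valued `f`. -/
def wLp {n : ℕ} (p : ℝ) (v : Rn n → ℝ) (Ω : Set (Rn n)) (f : Rn n → ℝ≥0∞) : ℝ≥0∞ :=
  (∫⁻ x in Ω, f x ^ p * ENNReal.ofReal (v x)) ^ (1 / p)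

/-- fractional maximal function `M_α f`. -/
def frMax {n : ℕ} (α : ℝ) (f : Rn n → ℝ) (x : Rn n) : ℝ≥0∞ :=
  ⨆ (r : ℝ) (_ : 0 < r),
    volume (ball x r) ^ (α / (n : ℝ) - 1) * ∫⁻ y in ball x r, ENNReal.ofReal (f y)

/-- Riesz potential `I_α f`. -/
def riesz {n : ℕ} (α : ℝ) (f : Rn n → ℝ) (x : Rn n) : ℝ≥0∞ :=
  ∫⁻ y, ENNReal.ofReal (f y) * ENNReal.ofReal (dist x y) ^ (α - (n : ℝ))

/-- the (closed) cube centered at `x₀` with side length `2r`. -/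
def cube {n : ℕ} (x₀ : Rn n) (r : ℝ) : Set (Rn n) := {y | ∀ i, |y i - x₀ i| ≤ r}

/-- a weight: locally integrable, positive a.e. -/
def IsWeight {n : ℕ} (v : Rn n → ℝ) : Prop :=
  LocallyIntegrable v volume ∧ ∀ᵐ x : Rn n ∂volume, 0 < v x

/-- Muckenhoupt `A_∞`. -/
def IsAinfty {n : ℕ} (v : Rn n → ℝ) : Prop :=
  ∃ C : ℝ, 0 < C ∧ ∃ δ : ℝ, 0 < δ ∧ δ ≤ 1 ∧
    ∀ (x₀ : Rn n) (r : ℝ), 0 < r → ∀ E : Set (Rn n), MeasurableSet E → E ⊆ cube x₀ r →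
      wMeasure v E ≤
        ENNReal.ofReal C * (volume E / volume (cube x₀ r)) ^ δ * wMeasure v (cube x₀ r)

/-- reverse doubling of order `β`. -/
def IsRD {n : ℕ} (v : Rn n → ℝ) (β : ℝ) : Prop :=
  ∃ c : ℝ, 0 < c ∧ ∀ (x' x : Rn n) (r' r : ℝ), 0 < r' → 0 < r →
    ball x' r' ⊆ ball x r →
      wMeasure v (ball x' r') ≤
        ENNReal.ofReal c * (volume (ball x' r') / volume (ball x r)) ^ β *
          wMeasure v (ball x r)

/-- `A(x,s) = sup_{s<y<∞} y^{-β} · sup_{0<τ<y} u(x,τ)`. -/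
def A10 {n : ℕ} (β : ℝ) (u : Rn n × ℝ → ℝ) (x : Rn n) (s : ℝ) : ℝ≥0∞ :=
  ⨆ (y : ℝ) (_ : s < y),
    ENNReal.ofReal y ^ (-β) *
      ⨆ (τ : ℝ) (_ : 0 < τ) (_ : τ < y), ENNReal.ofReal (u (x, τ))

/-!
Writing `|x - y|^{-β} = β ∫_{|x-y|}^∞ t^{-β-1} dt` and applying Tonelli bounds the tail integral
`∫_{B(x,r)ᶜ} g |x - y|^{-β}` by `β ∫_r^∞ t^{-β-1} ∫_{B(x,t)} g dt`. Testing the right-hand side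
`F` of the inequality at the pairs `τ < y` that define `A(x,t)` gives `A(x,t) ∫_{B(x,t)} g ≤ F`,
and letting `y ↓ r` gives `u(x,r) ≤ r^β A(x,r)`. Substituting `∫_{B(x,t)} g ≤ F / A(x,t)` leaves
exactly `β F` times the quantity whose supremum is assumed finite.
-/

open Filter Topology

lemma ofReal_mul_lintegral_Ioi_rpow {β d : ℝ} (hβ : 0 < β) (hd : 0 < d) :
    ENNReal.ofReal β * ∫⁻ t in Ioi d, ENNReal.ofReal t ^ (-β - 1) = ENNReal.ofReal d ^ (-β) := by
  have hlt : -β - 1 < -1 := by linarith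
  have hofReal : ∫⁻ t in Ioi d, ENNReal.ofReal t ^ (-β - 1)
      = ENNReal.ofReal (∫ t in Ioi d, t ^ (-β - 1)) := by
    rw [ofReal_integral_eq_lintegral_ofReal (integrableOn_Ioi_rpow_of_lt hlt hd)
      (ae_restrict_of_forall_mem measurableSet_Ioi fun t ht ↦
        Real.rpow_nonneg (hd.trans ht).le _)]
    exact setLIntegral_congr_fun measurableSet_Ioi fun t ht ↦
      ENNReal.ofReal_rpow_of_pos (hd.trans ht)
  rw [hofReal, integral_Ioi_rpow_of_lt hlt hd, ← ENNReal.ofReal_mul hβ.le,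
    ENNReal.ofReal_rpow_of_pos hd, show -β - 1 + 1 = -β by ring]
  congr 1
  field_simp

theorem lintegral_compl_ball_mul_dist_rpow_le {X : Type*} [PseudoMetricSpace X]
    [MeasurableSpace X] [OpensMeasurableSpace X] (μ : Measure X) [SFinite μ]
    {β r : ℝ} (hβ : 0 < β) (hr : 0 < r) {g : X → ℝ≥0∞} (hg : Measurable g) (x : X) :
    ∫⁻ y in (ball x r)ᶜ, g y * ENNReal.ofReal (dist x y) ^ (-β) ∂μ ≤
      ENNReal.ofReal β * ∫⁻ t in Ioi r, ENNReal.ofReal t ^ (-β - 1) * ∫⁻ y in ball x t, g y ∂μ := by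
  set f : X → ℝ → ℝ≥0∞ := fun y t ↦ (ball x t).indicator g y * ENNReal.ofReal t ^ (-β - 1)
  have hf : Measurable (Function.uncurry f) := by
    refine Measurable.mul ?_ (by fun_prop)
    exact (hg.comp measurable_fst).indicator
      (isOpen_lt (continuous_fst.dist continuous_const) continuous_snd).measurableSet
  have hpoint : ∀ y ∈ (ball x r)ᶜ,
      g y * ENNReal.ofReal (dist x y) ^ (-β) = ENNReal.ofReal β * ∫⁻ t in Ioi r, f y t := by
    intro y hy
    have hry : r ≤ dist x y := by simpa [dist_comm] using hy
    have hf_eq : ∀ t, f y t = (Ioi (dist x y)).indicator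
        (fun t ↦ g y * ENNReal.ofReal t ^ (-β - 1)) t := by
      intro t
      by_cases ht : dist x y < t <;> simp [f, ht, dist_comm, indicator]
    simp only [hf_eq]
    rw [lintegral_indicator measurableSet_Ioi, Measure.restrict_restrict measurableSet_Ioi,
      Ioi_inter_Ioi, sup_eq_left.2 hry, lintegral_const_mul _ (by fun_prop), mul_left_comm,
      ofReal_mul_lintegral_Ioi_rpow hβ (hr.trans_le hry)]
  calc ∫⁻ y in (ball x r)ᶜ, g y * ENNReal.ofReal (dist x y) ^ (-β) ∂μ
      = ∫⁻ y in (ball x r)ᶜ, ENNReal.ofReal β * (∫⁻ t in Ioi r, f y t) ∂μ :=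
        setLIntegral_congr_fun measurableSet_ball.compl hpoint
    _ ≤ ∫⁻ y, ENNReal.ofReal β * (∫⁻ t in Ioi r, f y t) ∂μ := setLIntegral_le_lintegral _ _
    _ = ENNReal.ofReal β * ∫⁻ t in Ioi r, (∫⁻ y, f y t ∂μ) := by
        rw [lintegral_const_mul' _ _ ofReal_ne_top, lintegral_lintegral_swap hf.aemeasurable]
    _ = ENNReal.ofReal β *
          ∫⁻ t in Ioi r, ENNReal.ofReal t ^ (-β - 1) * ∫⁻ y in ball x t, g y ∂μ := by
        congr 1
        refine lintegral_congr fun t ↦ ?_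
        rw [lintegral_mul_const _ (hg.indicator measurableSet_ball),
          lintegral_indicator measurableSet_ball, mul_comm]

section A10

variable {n : ℕ} {β : ℝ} {u : Rn n × ℝ → ℝ} {x : Rn n}

lemma ofReal_rpow_mul_le_A10 {s y τ : ℝ} (hsy : s < y) (hτ : 0 < τ) (hτy : τ < y) :
    ENNReal.ofReal y ^ (-β) * ENNReal.ofReal (u (x, τ)) ≤ A10 β u x s :=
  le_iSup₂_of_le y hsy <| mul_le_mul_right
    (le_iSup₂_of_le τ hτ (le_iSup_of_le (f := fun _ ↦ _) hτy le_rfl)) _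

lemma A10_ne_zero {r t : ℝ} (hr : 0 < r) (hrt : r < t) (hu : ENNReal.ofReal (u (x, r)) ≠ 0) :
    A10 β u x t ≠ 0 := by
  refine (lt_of_lt_of_le ?_ (ofReal_rpow_mul_le_A10 (lt_add_one t) hr
    (hrt.trans (lt_add_one t)))).ne'
  exact ENNReal.mul_pos (ENNReal.rpow_pos (ENNReal.ofReal_pos.2 (by linarith)) ofReal_ne_top).ne' hu

lemma ofReal_le_rpow_mul_A10 {r : ℝ} (hr : 0 < r) :
    ENNReal.ofReal (u (x, r)) ≤ ENNReal.ofReal r ^ β * A10 β u x r := by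
  have hlim : Tendsto (fun y ↦ ENNReal.ofReal y ^ (-β) * ENNReal.ofReal (u (x, r))) (𝓝[>] r)
      (𝓝 (ENNReal.ofReal r ^ (-β) * ENNReal.ofReal (u (x, r)))) :=
    ENNReal.Tendsto.mul_const ((ENNReal.continuous_rpow_const.comp
      ENNReal.continuous_ofReal).continuousWithinAt.tendsto) (Or.inr ofReal_ne_top)
  have hle : ENNReal.ofReal r ^ (-β) * ENNReal.ofReal (u (x, r)) ≤ A10 β u x r :=
    le_of_tendsto hlim (eventually_nhdsWithin_of_forall fun y hy ↦
      ofReal_rpow_mul_le_A10 hy hr hy)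
  calc ENNReal.ofReal (u (x, r))
      = ENNReal.ofReal r ^ β * (ENNReal.ofReal r ^ (-β) * ENNReal.ofReal (u (x, r))) := by
        rw [← mul_assoc, ENNReal.rpow_neg, ENNReal.mul_inv_cancel
          (ENNReal.rpow_pos (by simpa using hr) ofReal_ne_top).ne'
          (ENNReal.rpow_ne_top_of_nonneg' (by simpa using hr) ofReal_ne_top), one_mul]
    _ ≤ ENNReal.ofReal r ^ β * A10 β u x r := mul_le_mul_right hle _

lemma A10_mul_le_iSup {φ : ℝ → ℝ≥0∞} (hφ : Monotone φ) (s : ℝ) :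
    A10 β u x s * φ s ≤ ⨆ (r : ℝ) (_ : 0 < r),
      ENNReal.ofReal (u (x, r)) * ⨆ (t : ℝ) (_ : r < t), ENNReal.ofReal t ^ (-β) * φ t := by
  simp only [A10, ENNReal.iSup_mul, ENNReal.mul_iSup]
  refine iSup₂_le fun y hsy ↦ iSup₂_le fun τ hτ ↦ iSup_le fun hτy ↦ ?_
  calc ENNReal.ofReal y ^ (-β) * ENNReal.ofReal (u (x, τ)) * φ s
      ≤ ENNReal.ofReal (u (x, τ)) * (ENNReal.ofReal y ^ (-β) * φ y) := by
        rw [mul_left_comm, mul_assoc]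
        exact mul_le_mul_right (mul_le_mul_right (hφ hsy.le) _) _
    _ ≤ _ := le_iSup_of_le τ <| le_iSup_of_le hτ <| le_iSup_of_le y <|
        le_iSup_of_le (f := fun _ ↦ _) hτy le_rfl

end A10

theorem ofReal_mul_lintegral_compl_ball_le {n : ℕ} {β : ℝ} (hβ : 0 < β) (u : Rn n × ℝ → ℝ)
    (x : Rn n) {r : ℝ} (hr : 0 < r) {g : Rn n → ℝ≥0∞} (hg : Measurable g) {F : ℝ≥0∞}
    (hF : F ≠ ⊤) (hball : ∀ t, A10 β u x t * ∫⁻ y in ball x t, g y ≤ F) :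
    ENNReal.ofReal (u (x, r)) * ∫⁻ y in (ball x r)ᶜ, g y * ENNReal.ofReal (dist x y) ^ (-β) ≤
      ENNReal.ofReal β * F * (ENNReal.ofReal r ^ β * A10 β u x r *
        ∫⁻ t in Ioi r, ENNReal.ofReal t ^ (-β - 1) * (A10 β u x t)⁻¹) := by
  rcases eq_or_ne (ENNReal.ofReal (u (x, r))) 0 with hu | hu
  · simp [hu]
  have hballF : ∀ t ∈ Ioi r, ∫⁻ y in ball x t, g y ≤ F * (A10 β u x t)⁻¹ := fun t ht ↦ by
    rw [← div_eq_mul_inv, ENNReal.le_div_iff_mul_le (Or.inl (A10_ne_zero hr ht hu)) (Or.inr hF),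
      mul_comm]
    exact hball t
  calc ENNReal.ofReal (u (x, r)) * ∫⁻ y in (ball x r)ᶜ, g y * ENNReal.ofReal (dist x y) ^ (-β)
      ≤ ENNReal.ofReal (u (x, r)) * (ENNReal.ofReal β *
          ∫⁻ t in Ioi r, ENNReal.ofReal t ^ (-β - 1) * ∫⁻ y in ball x t, g y) := by
        gcongr
        exact lintegral_compl_ball_mul_dist_rpow_le volume hβ hr hg x
    _ ≤ ENNReal.ofReal (u (x, r)) * (ENNReal.ofReal β *
          ∫⁻ t in Ioi r, ENNReal.ofReal t ^ (-β - 1) * (F * (A10 β u x t)⁻¹)) := by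
        refine mul_le_mul_right (mul_le_mul_right ?_ _) _
        exact setLIntegral_mono' measurableSet_Ioi fun t ht ↦ mul_le_mul_right (hballF t ht) _
    _ = ENNReal.ofReal β * F * (ENNReal.ofReal (u (x, r)) *
          ∫⁻ t in Ioi r, ENNReal.ofReal t ^ (-β - 1) * (A10 β u x t)⁻¹) := by
        simp_rw [mul_left_comm _ F]
        rw [lintegral_const_mul' F _ hF]
        ring
    _ ≤ _ := by
        gcongr
        exact ofReal_le_rpow_mul_A10 hr

theorem stmt10_general (n : ℕ) (β : ℝ) (hβ0 : 0 < β)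
    (u : Rn n × ℝ → ℝ)
    (hcond : (⨆ (x : Rn n) (s : ℝ) (_ : 0 < s),
        ENNReal.ofReal s ^ β * A10 β u x s *
          ∫⁻ t in Ioi s, ENNReal.ofReal t ^ (-β - 1) * (A10 β u x t)⁻¹) ≠ ⊤) :
    ∃ C : ℝ≥0∞, C ≠ ⊤ ∧ ∀ g : Rn n → ℝ≥0∞, Measurable g →
      (⨆ (x : Rn n) (r : ℝ) (_ : 0 < r),
          ENNReal.ofReal (u (x, r)) *
            ∫⁻ y in (ball x r)ᶜ, g y * ENNReal.ofReal (dist x y) ^ (-β)) ≤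
        C * ⨆ (x : Rn n) (r : ℝ) (_ : 0 < r),
          ENNReal.ofReal (u (x, r)) *
            ⨆ (t : ℝ) (_ : r < t), ENNReal.ofReal t ^ (-β) * ∫⁻ y in ball x t, g y := by
  set K := ⨆ (x : Rn n) (s : ℝ) (_ : 0 < s), ENNReal.ofReal s ^ β * A10 β u x s *
    ∫⁻ t in Ioi s, ENNReal.ofReal t ^ (-β - 1) * (A10 β u x t)⁻¹
  -- `+ 1` makes `C ≠ 0`, so the bound also holds when the right-hand side is `⊤`.
  refine ⟨ENNReal.ofReal β * K + 1, by finiteness, fun g hg ↦ ?_⟩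
  set F := ⨆ (x : Rn n) (r : ℝ) (_ : 0 < r), ENNReal.ofReal (u (x, r)) *
    ⨆ (t : ℝ) (_ : r < t), ENNReal.ofReal t ^ (-β) * ∫⁻ y in ball x t, g y
  rcases eq_or_ne F ⊤ with hF | hF
  · simp [hF]
  have hball (x : Rn n) (t : ℝ) : A10 β u x t * ∫⁻ y in ball x t, g y ≤ F :=
    A10_mul_le_iSup (φ := fun t ↦ ∫⁻ y in ball x t, g y)
      (fun _ _ h ↦ lintegral_mono_set (ball_subset_ball h)) t |>.trans (le_iSup_of_le x le_rfl)
  calc _ ≤ ENNReal.ofReal β * F * K := iSup_le fun x ↦ iSup₂_le fun r hr ↦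
        (ofReal_mul_lintegral_compl_ball_le hβ0 u x hr hg hF (hball x)).trans
          (mul_le_mul_right (le_iSup₂_of_le x r (le_iSup_of_le (f := fun _ ↦ _) hr le_rfl)) _)
    _ ≤ (ENNReal.ofReal β * K + 1) * F := by
        rw [mul_right_comm]
        exact mul_le_mul_left le_self_add F

/-- Corollary 5.3: a sufficient condition for the uniform (in `x`)
two-operator inequality. -/
theorem stmt10 (n : ℕ) (hn : 1 ≤ n) (β : ℝ) (hβ0 : 0 < β) (hβn : β < (n : ℝ))
    (u : Rn n × ℝ → ℝ) (huc : ContinuousOn u (univ ×ˢ Ioi 0))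
    (hup : ∀ x : Rn n, ∀ t ∈ Ioi (0 : ℝ), 0 < u (x, t))
    (hcond : (⨆ (x : Rn n) (s : ℝ) (_ : 0 < s),
        ENNReal.ofReal s ^ β * A10 β u x s *
          ∫⁻ t in Ioi s, ENNReal.ofReal t ^ (-β - 1) * (A10 β u x t)⁻¹) ≠ ⊤) :
    ∃ C : ℝ≥0∞, C ≠ ⊤ ∧ ∀ g : Rn n → ℝ≥0∞, Measurable g →
      (⨆ (x : Rn n) (r : ℝ) (_ : 0 < r),
          ENNReal.ofReal (u (x, r)) *
            ∫⁻ y in (ball x r)ᶜ, g y * ENNReal.ofReal (dist x y) ^ (-β)) ≤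
        C * ⨆ (x : Rn n) (r : ℝ) (_ : 0 < r),
          ENNReal.ofReal (u (x, r)) *
            ⨆ (t : ℝ) (_ : r < t), ENNReal.ofReal t ^ (-β) * ∫⁻ y in ball x t, g y :=
  stmt10_general n β hβ0 u hcond
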